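/- arXiv:2102.11649 — 6 statements merged into one kernel-verified Lean document; each statement's English description precedes it below -/
import Mathlib

section
/- A morphism f : Y ⟶ X of presheaves on a small category C is representable if and only if the induced projection functor from the category of elements of Y to the category of elements of X has a right adjoint. -/
/-!
Over an element `x ∈ X(Γ)`, the comma category `(Γ, x) ↓ ∫f` of the functor `∫f : ∫Y ⥤ ∫X` is
the category of elements of the pullback `Y ×_X yΓ` of `f` along `x : yΓ ⟶ X`. So it has an
initial object exactly when that pullback is representable, and `∫f` is a right adjoint exactly
when all these comma categories have initial objects. Mathlib's `Functor.Elements` is the opposite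
of the usual category of elements, which turns "right adjoint" into "`op` is a left adjoint".
-/

open CategoryTheory Limits Opposite

universe u v

namespace CategoryTheory

lemma Functor.isRightAdjoint_iff_op_isLeftAdjoint {A B : Type*} [Category A] [Category B]
    (F : A ⥤ B) : F.IsRightAdjoint ↔ F.op.IsLeftAdjoint :=
  ⟨fun _ => inferInstance, fun ⟨G, ⟨adj⟩⟩ => ⟨G.unop, ⟨adj.unop.ofNatIsoRight F.opUnopIso⟩⟩⟩

variable {C : Type u} [Category.{v} C] {Y X Z : Cᵒᵖ ⥤ Type v}

def pullbackPresheaf (f : Y ⟶ X) (g : Z ⟶ X) : Cᵒᵖ ⥤ Type v where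
  obj Δ := {p : Y.obj Δ × Z.obj Δ // f.app Δ p.1 = g.app Δ p.2}
  map σ := ↾fun p => ⟨(Y.map σ p.1.1, Z.map σ p.1.2), by
    simp only [NatTrans.naturality_apply, p.2]⟩

namespace pullbackPresheaf

variable (f : Y ⟶ X) (g : Z ⟶ X)

def fst : pullbackPresheaf f g ⟶ Y where
  app _ := ↾fun p => p.1.1

def snd : pullbackPresheaf f g ⟶ Z where
  app _ := ↾fun p => p.1.2

lemma isPullback : IsPullback (fst f g) (snd f g) f g := by
  refine .of_forall_isPullback_app fun Δ => (Types.isPullback_iff _ _ _ _).2 ⟨?_, ?_, ?_⟩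
  · ext p
    exact p.2
  · rintro p q ⟨h₁, h₂⟩
    exact Subtype.ext (Prod.ext h₁ h₂)
  · intro y z h
    exact ⟨⟨(y, z), h⟩, rfl, rfl⟩

end pullbackPresheaf

lemma IsPullback.exists_isPullback_yoneda_iff_isRepresentable {P : Cᵒᵖ ⥤ Type v} {a : C}
    {f : Y ⟶ X} {g : yoneda.obj a ⟶ X} {p₁ : P ⟶ Y} {p₂ : P ⟶ yoneda.obj a}
    (h : IsPullback p₁ p₂ f g) :
    (∃ (b : C) (snd : b ⟶ a) (fst : yoneda.obj b ⟶ Y), IsPullback fst (yoneda.map snd) f g) ↔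
      P.IsRepresentable := by
  constructor
  · rintro ⟨b, snd, fst, hb⟩
    exact .mk' (hb.isoIsPullback _ _ h)
  · intro _
    let e := P.reprW
    refine ⟨P.reprX, yoneda.preimage (e.hom ≫ p₂), e.hom ≫ p₁, ?_⟩
    exact h.of_iso' e (Iso.refl _) (Iso.refl _) (Iso.refl _) (by simp) (by simp) (by simp) (by simp)

variable (f : Y ⟶ X) (A : X.Elements)

abbrev elementsFiber : Cᵒᵖ ⥤ Type v :=
  pullbackPresheaf f (yonedaEquiv.symm A.2)

lemma relativelyRepresentable_yoneda_iff :
    yoneda.relativelyRepresentable f ↔ ∀ A : X.Elements, (elementsFiber f A).IsRepresentable := by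
  refine (forall₂_congr fun _ g =>
    (pullbackPresheaf.isPullback f g).exists_isPullback_yoneda_iff_isRepresentable).trans
    ⟨fun h A => h _ _, fun h a g => ?_⟩
  rw [← yonedaEquiv.symm_apply_apply g]
  exact h ⟨op a, yonedaEquiv g⟩

def structuredArrowMapElementsToFiber :
    StructuredArrow A (NatTrans.mapElements f) ⥤ (elementsFiber f A).Elements where
  obj S := ⟨S.right.1, ⟨(S.right.2, S.hom.1.unop), S.hom.2.symm⟩⟩
  map φ := ⟨φ.right.1,
    Subtype.ext (Prod.ext φ.right.2 (congrArg (·.1.unop) (StructuredArrow.w φ)))⟩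

def fiberToStructuredArrowMapElements :
    (elementsFiber f A).Elements ⥤ StructuredArrow A (NatTrans.mapElements f) where
  obj E := StructuredArrow.mk (Y := Y.elementsMk E.1 E.2.1.1) ⟨E.2.1.2.op, E.2.2.symm⟩
  map ψ := StructuredArrow.homMk ⟨ψ.1, congrArg (·.1.1) ψ.2⟩ (by
    ext
    exact congrArg (·.1.2.op) ψ.2)

/-- Both composites are the identity on the nose, up to eta. -/
def structuredArrowMapElementsEquivalence :
    StructuredArrow A (NatTrans.mapElements f) ≌ (elementsFiber f A).Elements :=
  .mk (structuredArrowMapElementsToFiber f A) (fiberToStructuredArrowMapElements f A)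
    (Iso.refl _) (Iso.refl _)

lemma hasInitial_structuredArrow_mapElements_iff :
    HasInitial (StructuredArrow A (NatTrans.mapElements f)) ↔
      (elementsFiber f A).IsRepresentable :=
  (structuredArrowMapElementsEquivalence f A).hasInitial_iff.trans
    (Functor.Elements.hasInitial_iff_isRepresentable _)

end CategoryTheory

/-- A morphism `f : Y ⟶ X` of presheaves on a small category `C` is representable if and only
if the induced projection functor between the (usual, contravariant) categories of elements
of `Y` and of `X` has a right adjoint. -/
theorem representable_iff_elements_leftAdjoint
    {C : Type u} [SmallCategory C] {Y X : Cᵒᵖ ⥤ Type u} (f : Y ⟶ X) :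
    yoneda.relativelyRepresentable f ↔ (NatTrans.mapElements f).op.IsLeftAdjoint := by
  rw [← Functor.isRightAdjoint_iff_op_isLeftAdjoint, isRightAdjoint_iff_hasInitial_structuredArrow,
    relativelyRepresentable_yoneda_iff]
  exact forall_congr' fun A => (hasInitial_structuredArrow_mapElements_iff f A).symm
end

section
/- If p : E ⥤ C is a Grothendieck fibration, then pullback (base change) of categories along p preserves left adjoints: for any functor q : A ⥤ C, if q has a right adjoint over C then its pullback along p has a right adjoint. -/
/-!
The right adjoint of the base change `A ×_C E ⥤ B ×_C E` of `L` sends `(b, e)` to `(R b, e')`,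
where `e' ⟶ e` is a cartesian lift of `q ε_b` for the counit `ε_b : L (R b) ⟶ b`. A morphism
`(L a, e'') ⟶ (b, e)` is an `f : L a ⟶ b` with a lift `e'' ⟶ e` of `q f = q (L f♭) ≫ q ε_b`,
where `f♭ : a ⟶ R b` is the transpose of `f`. Since `p` is a fibration, `e' ⟶ e` is strongly
cartesian, so this lift factors uniquely through it by a map over `q (L f♭)`; paired with `f♭`
this is the unique factorisation through `(L (R b), e') ⟶ (b, e)`. Pullbacks in `Cat` are computed
by the strict pullback category, whose morphisms are pairs with the `E`-component lying over the
image of the `A`-component.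
-/

open CategoryTheory CategoryTheory.Limits

universe u

def catHomOf {A B : Type u} [Category.{u} A] [Category.{u} B] (F : A ⥤ B) :
    Cat.of A ⟶ Cat.of B := F.toCatHom

namespace CategoryTheory

universe v₁ v₂ v₃ v₄ v₅ u₁ u₂ u₃ u₄ u₅

lemma Adjunction.map_homEquiv_comp_counit {A : Type u₁} [Category.{v₁} A] {B : Type u₂}
    [Category.{v₂} B] {L : A ⥤ B} {R : B ⥤ A} (adj : L ⊣ R) {a : A} {b : B} (f : L.obj a ⟶ b) :
    L.map (adj.homEquiv a b f) ≫ adj.counit.app b = f :=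
  (adj.eq_homEquiv_apply f _).1 rfl

@[ext]
structure StrictPullback {A : Type u₁} [Category.{v₁} A] {C : Type u₃} [Category.{v₃} C]
    {E : Type u₄} [Category.{v₄} E] (q : A ⥤ C) (p : E ⥤ C) where
  left : A
  right : E
  w : q.obj left = p.obj right

namespace StrictPullback

section

variable {A : Type u₁} [Category.{v₁} A] {C : Type u₃} [Category.{v₃} C]
  {E : Type u₄} [Category.{v₄} E] {q : A ⥤ C} {p : E ⥤ C}

@[ext]
structure Hom (x y : StrictPullback q p) where
  left : x.left ⟶ y.left
  right : x.right ⟶ y.right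
  [isHomLift : p.IsHomLift (q.map left) right]

attribute [instance] Hom.isHomLift

instance : Category (StrictPullback q p) where
  Hom := Hom
  id x :=
    { left := 𝟙 x.left, right := 𝟙 x.right
      isHomLift := by
        rw [q.map_id]
        exact IsHomLift.id x.w.symm }
  comp f g :=
    { left := f.left ≫ g.left, right := f.right ≫ g.right
      isHomLift := by
        rw [q.map_comp]
        infer_instance }

@[ext]
lemma hom_ext {x y : StrictPullback q p} {f g : x ⟶ y} (h₁ : f.left = g.left)
    (h₂ : f.right = g.right) : f = g :=
  Hom.ext h₁ h₂

@[simp] lemma id_left (x : StrictPullback q p) : Hom.left (𝟙 x) = 𝟙 x.left := rfl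
@[simp] lemma id_right (x : StrictPullback q p) : Hom.right (𝟙 x) = 𝟙 x.right := rfl
@[simp] lemma comp_left {x y z : StrictPullback q p} (f : x ⟶ y) (g : y ⟶ z) :
    (f ≫ g).left = f.left ≫ g.left := rfl
@[simp] lemma comp_right {x y z : StrictPullback q p} (f : x ⟶ y) (g : y ⟶ z) :
    (f ≫ g).right = f.right ≫ g.right := rfl

@[simp] lemma eqToHom_left {x y : StrictPullback q p} (h : x = y) :
    Hom.left (eqToHom h) = eqToHom (congrArg StrictPullback.left h) := by
  subst h; rfl

@[simp] lemma eqToHom_right {x y : StrictPullback q p} (h : x = y) :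
    Hom.right (eqToHom h) = eqToHom (congrArg StrictPullback.right h) := by
  subst h; rfl

variable (q p)

def fst : StrictPullback q p ⥤ A where
  obj x := x.left
  map f := f.left

def snd : StrictPullback q p ⥤ E where
  obj x := x.right
  map f := f.right

lemma condition : fst q p ⋙ q = snd q p ⋙ p :=
  Functor.ext (fun x => x.w) fun _ _ f => IsHomLift.fac p (q.map f.left) f.right

variable {q p} {D : Type u₅} [Category.{v₅} D]

def lift (F : D ⥤ A) (G : D ⥤ E) (h : F ⋙ q = G ⋙ p) : D ⥤ StrictPullback q p where
  obj d := ⟨F.obj d, G.obj d, Functor.congr_obj h d⟩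
  map f :=
    { left := F.map f, right := G.map f
      isHomLift := IsHomLift.of_fac p _ _ (Functor.congr_obj h _).symm
        (Functor.congr_obj h _).symm (Functor.congr_hom h f) }

lemma functor_ext {F G : D ⥤ StrictPullback q p} (h₁ : F ⋙ fst q p = G ⋙ fst q p)
    (h₂ : F ⋙ snd q p = G ⋙ snd q p) : F = G := by
  refine Functor.ext (fun d => StrictPullback.ext (Functor.congr_obj h₁ d)
    (Functor.congr_obj h₂ d)) fun d d' f => ?_
  ext
  · simp only [comp_left, eqToHom_left]
    exact Functor.congr_hom h₁ f
  · simp only [comp_right, eqToHom_right]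
    exact Functor.congr_hom h₂ f

end

section

open Functor.IsPreFibered

variable {A : Type u₁} [Category.{v₁} A] {B : Type u₂} [Category.{v₂} B]
  {C : Type u₃} [Category.{v₃} C] {E : Type u₄} [Category.{v₄} E] {L : A ⥤ B}
  {q : B ⥤ C} {p : E ⥤ C}

-- `mapLeft` and `rightAdjointObj` are reducible so that instance search sees through their objects.
variable (L q p) in
abbrev mapLeft :
    StrictPullback (L ⋙ q) p ⥤ StrictPullback q p where
  obj y := ⟨L.obj y.left, y.right, y.w⟩
  map f := { left := L.map f.left, right := f.right, isHomLift := f.isHomLift }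
  map_id _ := by ext <;> simp
  map_comp _ _ := by ext <;> simp

variable [p.IsFibered] {R : B ⥤ A} (adj : L ⊣ R)

noncomputable abbrev rightAdjointObj (x : StrictPullback q p) : StrictPullback (L ⋙ q) p :=
  ⟨R.obj x.left, pullbackObj x.w.symm (q.map (adj.counit.app x.left)),
    (pullbackObj_proj _ _).symm⟩

@[simps]
noncomputable def counitHom (x : StrictPullback q p) :
    (mapLeft L q p).obj (rightAdjointObj adj x) ⟶ x :=
  { left := adj.counit.app x.left
    right := pullbackMap x.w.symm (q.map (adj.counit.app x.left))
    isHomLift := (pullbackMap.IsCartesian x.w.symm _).toIsHomLift }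

variable {adj} {x : StrictPullback q p} {y : StrictPullback (L ⋙ q) p}

@[simps]
noncomputable def liftHom (v : (mapLeft L q p).obj y ⟶ x) : y ⟶ rightAdjointObj adj x :=
  { left := adj.homEquiv _ _ v.left
    right := Functor.IsStronglyCartesian.map p (q.map (adj.counit.app x.left))
      (pullbackMap x.w.symm _) (g := (L ⋙ q).map (adj.homEquiv _ _ v.left)) (f' := q.map v.left)
      ((congrArg q.map (adj.map_homEquiv_comp_counit v.left)).symm.trans (q.map_comp _ _))
      v.right
    isHomLift := Functor.IsStronglyCartesian.map_isHomLift p (q.map (adj.counit.app x.left))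
      (pullbackMap x.w.symm _) _ v.right }

lemma liftHom_comp_counitHom (v : (mapLeft L q p).obj y ⟶ x) :
    (mapLeft L q p).map (liftHom v) ≫ counitHom adj x = v := by
  ext
  · exact adj.map_homEquiv_comp_counit v.left
  · simp only [comp_right, liftHom_right, counitHom_right]
    exact Functor.IsStronglyCartesian.fac _ _ _ _ _

lemma eq_liftHom {v : (mapLeft L q p).obj y ⟶ x} (m : y ⟶ rightAdjointObj adj x)
    (hm : (mapLeft L q p).map m ≫ counitHom adj x = v) : m = liftHom v := by
  have h_left : m.left = adj.homEquiv _ _ v.left :=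
    (adj.eq_homEquiv_apply _ _).2 (congrArg Hom.left hm)
  have : p.IsHomLift ((L ⋙ q).map (adj.homEquiv _ _ v.left)) m.right := h_left ▸ m.isHomLift
  ext
  · exact h_left
  · rw [liftHom_right]
    exact Functor.IsStronglyCartesian.map_uniq p _ _ _ _ _ (congrArg Hom.right hm)

variable (adj) in
noncomputable def isTerminalCounitHom (x : StrictPullback q p) :
    IsTerminal (CostructuredArrow.mk (counitHom adj x)) :=
  IsTerminal.ofUniqueHom
    (fun g => CostructuredArrow.homMk (liftHom g.hom) (liftHom_comp_counitHom g.hom))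
    fun _ m => CostructuredArrow.hom_ext _ _ (eq_liftHom m.left (CostructuredArrow.w m))

variable (q p) in
lemma isLeftAdjoint_mapLeft (adj : L ⊣ R) : (mapLeft L q p).IsLeftAdjoint :=
  isLeftAdjoint_iff_hasTerminal_costructuredArrow.2 fun x => (isTerminalCounitHom adj x).hasTerminal

end

section

variable {A B C E : Type u} [Category.{u} A] [Category.{u} B] [Category.{u} C] [Category.{u} E]

lemma isPullback (q : A ⥤ C) (p : E ⥤ C) :
    IsPullback (C := Cat.{u, u}) (catHomOf (fst q p)) (catHomOf (snd q p))
      (catHomOf q) (catHomOf p) :=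
  IsPullback.of_isLimit (c := PullbackCone.mk (W := Cat.of (StrictPullback q p))
      (catHomOf (fst q p)) (catHomOf (snd q p)) (congrArg Functor.toCatHom (condition q p)))
    (PullbackCone.IsLimit.mk _
      (fun s => catHomOf (lift s.fst.toFunctor s.snd.toFunctor
        (congrArg Cat.Hom.toFunctor s.condition)))
      (fun _ => rfl) (fun _ => rfl)
      fun _ _ h₁ h₂ => Cat.Hom.ext
        (functor_ext (congrArg Cat.Hom.toFunctor h₁) (congrArg Cat.Hom.toFunctor h₂)))

lemma pullback_map_eq_mapLeft (L : A ⥤ B) (q : B ⥤ C) (p : E ⥤ C)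
    (h₁ : catHomOf (L ⋙ q) ≫ 𝟙 (Cat.of C) = catHomOf L ≫ catHomOf q)
    (h₂ : catHomOf p ≫ 𝟙 (Cat.of C) = 𝟙 (Cat.of E) ≫ catHomOf p) :
    pullback.map (catHomOf (L ⋙ q)) (catHomOf p) (catHomOf q) (catHomOf p)
        (catHomOf L) (𝟙 (Cat.of E)) (𝟙 (Cat.of C)) h₁ h₂ =
      (isPullback (L ⋙ q) p).isoPullback.inv ≫ catHomOf (mapLeft L q p) ≫
        (isPullback q p).isoPullback.hom := by
  rw [Iso.eq_inv_comp]
  apply pullback.hom_ext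
  · simp only [pullback.map, Category.assoc, pullback.lift_fst,
      IsPullback.isoPullback_hom_fst_assoc]
    rw [IsPullback.isoPullback_hom_fst]
    rfl
  · simp only [pullback.map, Category.assoc, pullback.lift_snd,
      IsPullback.isoPullback_hom_snd_assoc]
    rw [IsPullback.isoPullback_hom_snd]
    rfl

end

end StrictPullback

end CategoryTheory

/-- Pullback along a Grothendieck fibration preserves left adjoints: given a fibration
`p : E ⥤ C` and an adjunction `L ⊣ R` with `L : A ⥤ B` lying over `C` (via `qA`, `qB`), the
induced functor between the pullback categories `A ×_C E ⥤ B ×_C E` is again a left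
adjoint, i.e. admits a right adjoint. -/
theorem fibration_pullback_preserves_leftAdjoint
    {A B C E : Type u} [Category.{u} A] [Category.{u} B] [Category.{u} C] [Category.{u} E]
    (p : E ⥤ C) [p.IsFibered]
    (qA : A ⥤ C) (qB : B ⥤ C) (L : A ⥤ B) (R : B ⥤ A) (adj : L ⊣ R)
    (hL : L ⋙ qB = qA)
    (eq₁ : catHomOf qA ≫ 𝟙 (Cat.of C) = catHomOf L ≫ catHomOf qB)
    (eq₂ : catHomOf p ≫ 𝟙 (Cat.of C) = 𝟙 (Cat.of E) ≫ catHomOf p) :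
    Functor.IsLeftAdjoint
      (pullback.map (C := Cat.{u, u})
        (catHomOf qA) (catHomOf p) (catHomOf qB) (catHomOf p)
        (catHomOf L) (𝟙 (Cat.of E)) (𝟙 (Cat.of C)) eq₁ eq₂).toFunctor := by
  subst hL
  rw [StrictPullback.pullback_map_eq_mapLeft, Cat.Hom.comp_toFunctor, Cat.Hom.comp_toFunctor]
  have : (StrictPullback.isPullback (L ⋙ qB) p).isoPullback.inv.toFunctor.IsLeftAdjoint :=
    (Cat.equivOfIso _).symm.isLeftAdjoint_functor
  have : (StrictPullback.isPullback qB p).isoPullback.hom.toFunctor.IsLeftAdjoint :=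
    (Cat.equivOfIso _).isLeftAdjoint_functor
  have : (catHomOf (StrictPullback.mapLeft L qB p)).toFunctor.IsLeftAdjoint :=
    StrictPullback.isLeftAdjoint_mapLeft qB p adj
  exact Functor.isLeftAdjoint_comp _ _
end

section
/- Let p : E ⥤ C be a Grothendieck fibration between small categories and let f : Y ⟶ X be a representable morphism of presheaves on C. Then the morphism p^* f : p^* Y ⟶ p^* X of presheaves on E, obtained by precomposition with p, is representable. -/
/-!
An element `x ∈ X (p e)` classifying `g : y e ⟶ p^* X` pulls `f` back to some `y b ⟶ y (p e)`,
given by `s : b ⟶ p e`. If `φ : a ⟶ e` is a cartesian lift of `s`, then the strong cartesian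
property of `φ` says precisely that `y a` is the pullback of `p^* y b ⟶ p^* y (p e)` along the
unit `y e ⟶ p^* y (p e)`. Since `g` factors through this unit and `p^*` preserves pullbacks,
pasting the two squares exhibits `y a` as the pullback of `p^* f` along `g`.
-/

open CategoryTheory Limits Functor Opposite

namespace CategoryTheory

universe v u₁ u₂

variable {C : Type u₁} [Category.{v} C] {E : Type u₂} [Category.{v} E]

lemma yonedaMap_comp_whiskerLeft_yonedaEquiv_symm (F : E ⥤ C) (e : E) {P : Cᵒᵖ ⥤ Type v}
    (x : P.obj (op (F.obj e))) :
    yonedaMap F e ≫ whiskerLeft F.op (yonedaEquiv.symm x) =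
      (yonedaEquiv.symm x : yoneda.obj e ⟶ F.op ⋙ P) := by
  ext e' χ
  simp [yonedaEquiv_symm_app_apply]

lemma IsPullback.whiskerLeft {J K D : Type*} [Category J] [Category K] [Category D]
    [HasPullbacks D] {P X Y Z : J ⥤ D} {fst : P ⟶ X} {snd : P ⟶ Y} {f : X ⟶ Z} {g : Y ⟶ Z}
    (h : IsPullback fst snd f g) (F : K ⥤ J) :
    IsPullback (F.whiskerLeft fst) (F.whiskerLeft snd) (F.whiskerLeft f) (F.whiskerLeft g) :=
  IsPullback.of_forall_isPullback_app fun k => h.app (F.obj k)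

lemma Functor.IsStronglyCartesian.isPullback_yonedaMap (p : E ⥤ C) {a b : E} (φ : a ⟶ b)
    [p.IsStronglyCartesian (p.map φ) φ] :
    IsPullback (yonedaMap p a) (yoneda.map φ) (whiskerLeft p.op (yoneda.map (p.map φ)))
      (yonedaMap p b) := by
  refine IsPullback.of_forall_isPullback_app fun e => ?_
  rw [Types.isPullback_iff]
  refine ⟨?_, ?_, ?_⟩
  · ext χ
    simp
  · rintro (χ₁ : e.unop ⟶ a) χ₂ ⟨hp : p.map χ₁ = p.map χ₂, hφ : χ₁ ≫ φ = χ₂ ≫ φ⟩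
    have : p.IsHomLift (p.map χ₁) χ₂ := hp ▸ inferInstance
    exact IsStronglyCartesian.ext p (p.map φ) φ (p.map χ₁) hφ
  · rintro (k : p.obj e.unop ⟶ p.obj a) (χ : e.unop ⟶ b) (hk : k ≫ p.map φ = p.map χ)
    obtain ⟨ψ, ⟨hψ, hψφ⟩, -⟩ := universal_property p (p.map φ) φ k (p.map χ) hk.symm χ
    exact ⟨ψ, (IsHomLift.eq_of_isHomLift p k ψ).symm, hψφ⟩

end CategoryTheory

/-- If `p : E ⥤ C` is a Grothendieck fibration between small categories and `f : Y ⟶ X` is a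
representable morphism of presheaves on `C`, then the precomposed morphism
`p^* f : p^* Y ⟶ p^* X` of presheaves on `E` is representable. -/
theorem representable_precomp_fibration
    {C E : Type u} [SmallCategory C] [SmallCategory E]
    (p : E ⥤ C) [p.IsFibered] {Y X : Cᵒᵖ ⥤ Type u} (f : Y ⟶ X)
    (hf : yoneda.relativelyRepresentable f) :
    yoneda.relativelyRepresentable (Functor.whiskerLeft p.op f : p.op ⋙ Y ⟶ p.op ⋙ X) := by
  intro e g
  obtain ⟨b, s, fst, hfst⟩ := hf (yonedaEquiv.symm (yonedaEquiv (F := p.op ⋙ X) g))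
  obtain ⟨a, φ, hφ⟩ := IsPreFibered.exists_isCartesian' (p := p) s
  obtain rfl : p.obj a = b := IsHomLift.domain_eq p s φ
  obtain rfl : s = p.map φ := IsHomLift.eq_of_isHomLift p s φ
  refine ⟨a, φ, yonedaMap p a ≫ Functor.whiskerLeft p.op fst, ?_⟩
  rw [← yonedaEquiv.symm_apply_apply g, ← yonedaMap_comp_whiskerLeft_yonedaEquiv_symm]
  exact (IsStronglyCartesian.isPullback_yonedaMap p φ).paste_horiz
    (hfst.whiskerLeft p.op)
end

section
/- Local representability is local: for a dependent presheaf Y over a presheaf X on a small category C, a local representability structure on Y over X is the same as a coherent family, indexed by pairs (Γ : C, x ∈ X(Γ)), of local representability structures on the restriction Y|x over the representable presheaf yΓ; the restriction map between these two kinds of data is a bijection. -/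
open CategoryTheory Opposite

universe u

variable {C : Type u} [SmallCategory C]

/-- A choice of context extension (representing object, projection, generic element,
with the universal property) for a dependent presheaf `Y` over `X` at an element
`v = (Γ, x)` of `X`: this is a representation of the presheaf `ρ ↦ Y (x[ρ])` on `C/Γ`. -/
structure ExtData (X : Cᵒᵖ ⥤ Type u) (Y : X.Elements ⥤ Type u) (v : X.Elements) :
    Type u where
  ext : C
  p : ext ⟶ v.1.unop
  q : Y.obj (X.elementsMk (op ext) (X.map p.op v.2))
  universal : ∀ (Δ : C) (σ : Δ ⟶ v.1.unop)
    (y : Y.obj (X.elementsMk (op Δ) (X.map σ.op v.2))),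
    ∃! τ : Δ ⟶ ext, ∃ h : τ ≫ p = σ,
      Y.map (⟨τ.op, by rw [← FunctorToTypes.map_comp_apply, ← op_comp, h]⟩ :
        X.elementsMk (op ext) (X.map p.op v.2) ⟶ X.elementsMk (op Δ) (X.map σ.op v.2)) q = y

/-- A local representability structure for `Y` over `X`: a choice of context extension for
every element of `X`. -/
def LocRepStructure (X : Cᵒᵖ ⥤ Type u) (Y : X.Elements ⥤ Type u) : Type u :=
  ∀ v : X.Elements, ExtData X Y v

/-- A family, indexed by elements `(Γ, x)` of `X`, of local representability structures for
the restriction `Y|x` over the representable presheaf `yΓ`: for each `(Δ, σ : Δ ⟶ Γ)` a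
context extension for the element `x[σ]`. -/
def LocRepFamily (X : Cᵒᵖ ⥤ Type u) (Y : X.Elements ⥤ Type u) : Type u :=
  ∀ (v : X.Elements) (Δ : C) (σ : Δ ⟶ v.1.unop),
    ExtData X Y (X.elementsMk (op Δ) (X.map σ.op v.2))

/-- Coherence of such a family: compatibility under restriction along morphisms of `C`. -/
def Coherent {X : Cᵒᵖ ⥤ Type u} {Y : X.Elements ⥤ Type u} (fam : LocRepFamily X Y) : Prop :=
  ∀ (v : X.Elements) (Δ : C) (σ : Δ ⟶ v.1.unop) (Θ : C) (τ : Θ ⟶ Δ),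
    HEq (fam v Θ (τ ≫ σ)) (fam (X.elementsMk (op Δ) (X.map σ.op v.2)) Θ τ)

/-- The restriction map from local representability structures for `Y` over `X` to coherent
families of local representability structures of the restrictions `Y|x` over `yΓ`. -/
def restrictLocRep (X : Cᵒᵖ ⥤ Type u) (Y : X.Elements ⥤ Type u)
    (s : LocRepStructure X Y) : {fam : LocRepFamily X Y // Coherent fam} :=
  ⟨fun v Δ σ => s (X.elementsMk (op Δ) (X.map σ.op v.2)),
   fun v Δ σ Θ τ => by
     have h : X.elementsMk (op Θ) (X.map (τ ≫ σ).op v.2)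
         = X.elementsMk (op Θ) (X.map τ.op (X.map σ.op v.2)) := by
       rw [op_comp, FunctorToTypes.map_comp_apply]
     exact congr_arg_heq s h⟩

/-! A coherent family is determined by its components at identities: coherence along `𝟙 Δ`
identifies the component of `x` at `σ : Δ ⟶ Γ` with the component of `x[σ]` at `𝟙 Δ`. So
restriction is inverted by taking, at each `(Γ, x)`, the family's component at `𝟙 Γ`. -/

section

variable {X : Cᵒᵖ ⥤ Type u} {Y : X.Elements ⥤ Type u}

lemma elementsMk_map_id (v : X.Elements) :
    X.elementsMk (op v.1.unop) (X.map (𝟙 v.1.unop).op v.2) = v :=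
  Sigma.ext rfl (heq_of_eq (by rw [op_id, Functor.map_id_apply]))

def LocRepFamily.atId (fam : LocRepFamily X Y) : LocRepStructure X Y :=
  fun v => elementsMk_map_id v ▸ fam v v.1.unop (𝟙 v.1.unop)

lemma LocRepFamily.atId_heq (fam : LocRepFamily X Y) (v : X.Elements) :
    HEq (fam.atId v) (fam v v.1.unop (𝟙 v.1.unop)) :=
  eqRec_heq _ _

lemma atId_restrictLocRep (s : LocRepStructure X Y) :
    (restrictLocRep X Y s).1.atId = s :=
  funext fun v => eq_of_heq <|
    (LocRepFamily.atId_heq _ v).trans (congr_arg_heq s (elementsMk_map_id v))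

lemma restrictLocRep_atId {fam : LocRepFamily X Y} (coh : Coherent fam) :
    restrictLocRep X Y fam.atId = ⟨fam, coh⟩ :=
  Subtype.ext <| funext fun v => funext fun Δ => funext fun σ => eq_of_heq <|
    (fam.atId_heq _).trans <|
      (coh v Δ σ Δ (𝟙 Δ)).symm.trans (congr_arg_heq (fam v Δ) (Category.id_comp σ))

end

/-- Locality of local representability: the restriction map from local representability
structures for `Y` over `X` to coherent families of local representability structures of the
restrictions `Y|x` over `yΓ` is invertible (a bijection). -/
theorem locRep_locality (X : Cᵒᵖ ⥤ Type u) (Y : X.Elements ⥤ Type u) :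
    Function.Bijective (restrictLocRep X Y) :=
  Function.bijective_iff_has_inverse.mpr
    ⟨fun fam => fam.1.atId, atId_restrictLocRep, fun fam => restrictLocRep_atId fam.2⟩
end

section
/- Let X be a presheaf on C and Y a locally representable dependent presheaf over X, and Z a dependent presheaf over the total presheaf (x : X) × Y(x). Then the presheaf of dependent natural transformations (y : Y) → Z(y) over X can be computed by: its value at (Γ, x ∈ X(Γ)) is Z evaluated at the extended context (Γ ▷ Y|x, x[p], q); this assignment satisfies the universal property of the dependent product and is hence isomorphic over X to the usual dependent product of presheaves. -/
/-!
The generic element `(Γ ▷ Y|x, x[p], q)` of `Σ X Y` maps to every element `(Δ, x[σ], y)` by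
exactly one morphism lying over `σ`. Restricting along these morphisms, a natural family is
determined by its value at the generic element, and every value there extends to a natural
family, because uniqueness makes the chosen morphisms compatible with restriction.
-/

open CategoryTheory Opposite

universe u

variable {C : Type u} [SmallCategory C]

/-- The usual dependent product along `Y` of a dependent presheaf `Z` over `Σ X Y`,
evaluated at an element `v = (Γ, x)` of `X`: natural families assigning to each
`σ : Δ ⟶ Γ` and `y ∈ Y(x[σ])` an element of `Z(x[σ], y)`. -/
def PiFam (X : Cᵒᵖ ⥤ Type u) (Y : X.Elements ⥤ Type u) (Z : Y.Elements ⥤ Type u)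
    (v : X.Elements) : Type u :=
  {fam : ∀ (Δ : C) (σ : Δ ⟶ v.1.unop) (y : Y.obj (X.elementsMk (op Δ) (X.map σ.op v.2))),
      Z.obj (Y.elementsMk (X.elementsMk (op Δ) (X.map σ.op v.2)) y) //
    ∀ (Δ : C) (σ : Δ ⟶ v.1.unop) (y : Y.obj (X.elementsMk (op Δ) (X.map σ.op v.2)))
      (Θ : C) (τ : Θ ⟶ Δ),
      Z.map (⟨⟨τ.op, by show X.map τ.op (X.map σ.op v.2) = X.map (τ ≫ σ).op v.2; rw [op_comp, FunctorToTypes.map_comp_apply]⟩, rfl⟩ :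
          Y.elementsMk (X.elementsMk (op Δ) (X.map σ.op v.2)) y ⟶
            Y.elementsMk (X.elementsMk (op Θ) (X.map (τ ≫ σ).op v.2))
              (Y.map (⟨τ.op, by show X.map τ.op (X.map σ.op v.2) = X.map (τ ≫ σ).op v.2; rw [op_comp, FunctorToTypes.map_comp_apply]⟩ :
                X.elementsMk (op Δ) (X.map σ.op v.2) ⟶
                  X.elementsMk (op Θ) (X.map (τ ≫ σ).op v.2)) y))
        (fam Δ σ y) =
        fam Θ (τ ≫ σ)
          (Y.map (⟨τ.op, by show X.map τ.op (X.map σ.op v.2) = X.map (τ ≫ σ).op v.2; rw [op_comp, FunctorToTypes.map_comp_apply]⟩ :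
            X.elementsMk (op Δ) (X.map σ.op v.2) ⟶
              X.elementsMk (op Θ) (X.map (τ ≫ σ).op v.2)) y)}

namespace PiFam

variable {X : Cᵒᵖ ⥤ Type u} {Y : X.Elements ⥤ Type u} {Z : Y.Elements ⥤ Type u}
  {v : X.Elements}

/-- A natural family is determined by its value at the generic element. -/
theorem apply_eq_map (fam : PiFam X Y Z v) (e : ExtData X Y v) {Δ : C} {σ : Δ ⟶ v.1.unop}
    {y : Y.obj (X.elementsMk (op Δ) (X.map σ.op v.2))} (t : Δ ⟶ e.ext) (ht : t ≫ e.p = σ)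
    (hy : Y.map (⟨t.op, by rw [← Functor.map_comp_apply, ← op_comp, ht]⟩ :
      X.elementsMk (op e.ext) (X.map e.p.op v.2) ⟶ X.elementsMk (op Δ) (X.map σ.op v.2))
      e.q = y) :
    fam.1 Δ σ y = Z.map ⟨⟨t.op, _⟩, hy⟩ (fam.1 e.ext e.p e.q) := by
  subst ht hy
  exact (fam.2 e.ext e.p e.q Δ t).symm

end PiFam

namespace ExtData

variable {X : Cᵒᵖ ⥤ Type u} {Y : X.Elements ⥤ Type u} {v : X.Elements} (e : ExtData X Y v)

/-- The generic element `(Γ ▷ Y|x, x[p], q)` of `Σ X Y`. -/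
abbrev generic : Y.Elements :=
  Y.elementsMk (X.elementsMk (op e.ext) (X.map e.p.op v.2)) e.q

section Lift

variable {Δ : C} {σ : Δ ⟶ v.1.unop} (y : Y.obj (X.elementsMk (op Δ) (X.map σ.op v.2)))

noncomputable def lift : Δ ⟶ e.ext :=
  (e.universal Δ σ y).choose

theorem lift_p : e.lift y ≫ e.p = σ :=
  (e.universal Δ σ y).choose_spec.1.choose

theorem map_lift_p_op :
    X.map (e.lift y).op (X.map e.p.op v.2) = X.map σ.op v.2 := by
  rw [← Functor.map_comp_apply, ← op_comp, e.lift_p]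

noncomputable def liftBase :
    X.elementsMk (op e.ext) (X.map e.p.op v.2) ⟶ X.elementsMk (op Δ) (X.map σ.op v.2) :=
  ⟨(e.lift y).op, e.map_lift_p_op y⟩

theorem map_liftBase_q : Y.map (e.liftBase y) e.q = y :=
  (e.universal Δ σ y).choose_spec.1.choose_spec

noncomputable def liftElem : e.generic ⟶ Y.elementsMk (X.elementsMk (op Δ) (X.map σ.op v.2)) y :=
  ⟨e.liftBase y, e.map_liftBase_q y⟩

theorem eq_liftElem (f : e.generic ⟶ Y.elementsMk (X.elementsMk (op Δ) (X.map σ.op v.2)) y)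
    (hf : f.1.1.unop ≫ e.p = σ) : f = e.liftElem y := by
  refine CategoryOfElements.ext _ _ _ (CategoryOfElements.ext _ _ _ ?_)
  exact Quiver.Hom.unop_inj ((e.universal Δ σ y).choose_spec.2 f.1.1.unop ⟨hf, f.2⟩)

end Lift

theorem liftElem_q : e.liftElem (σ := e.p) e.q = 𝟙 e.generic :=
  (e.eq_liftElem e.q (𝟙 _) (Category.id_comp _)).symm

theorem liftElem_comp_restrict {Δ Θ : C} {σ : Δ ⟶ v.1.unop}
    (y : Y.obj (X.elementsMk (op Δ) (X.map σ.op v.2))) (τ : Θ ⟶ Δ)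
    (hX : X.map τ.op (X.map σ.op v.2) = X.map (τ ≫ σ).op v.2) :
    e.liftElem y ≫ ⟨⟨τ.op, hX⟩, rfl⟩ = e.liftElem (Y.map ⟨τ.op, hX⟩ y) :=
  e.eq_liftElem _ _ (by
    change (τ ≫ e.lift y) ≫ e.p = _; rw [Category.assoc, e.lift_p])

variable (Z : Y.Elements ⥤ Type u)

noncomputable def piFamOfGeneric (z : Z.obj e.generic) : PiFam X Y Z v :=
  ⟨fun _ _ y => Z.map (e.liftElem y) z, fun _ _ y _ τ => by
    rw [← Functor.map_comp_apply, e.liftElem_comp_restrict]⟩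

noncomputable def piFamEquiv : PiFam X Y Z v ≃ Z.obj e.generic where
  toFun fam := fam.1 e.ext e.p e.q
  invFun := e.piFamOfGeneric Z
  left_inv fam := Subtype.ext <| funext fun _ => funext fun _ => funext fun y =>
    (fam.apply_eq_map e (e.lift y) (e.lift_p y) (e.map_liftBase_q y)).symm
  right_inv z := by
    change Z.map (e.liftElem e.q) z = z
    rw [e.liftElem_q, Functor.map_id_apply]

end ExtData

/-- For a locally representable `Y` over `X` with chosen context extensions and a dependent
presheaf `Z` over the total presheaf of `Y`, the dependent product of `Z` along `Y` at
`(Γ, x)` is computed as the value of `Z` at the extended context `(Γ ▷ Y|x, x[p], q)`. -/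
theorem dependent_product_via_context_extension
    (X : Cᵒᵖ ⥤ Type u) (Y : X.Elements ⥤ Type u) (Z : Y.Elements ⥤ Type u)
    (E : ∀ v : X.Elements, ExtData X Y v) (v : X.Elements) :
    Nonempty (PiFam X Y Z v ≃
      Z.obj (Y.elementsMk (X.elementsMk (op (E v).ext) (X.map (E v).p.op v.2)) (E v).q)) :=
  ⟨(E v).piFamEquiv Z⟩
end

section
/- Let F : C ⥤ D be a functor between small categories and A a dependent presheaf over a presheaf X' on D (equivalently over F_! X when X' = F_! X for X a presheaf on C). Define (F^† A)(Γ, x) := A(F Γ, η_X(x)) where η is the unit of F_! ⊣ F^*. Then elements of A over F_! X (dependent sections) are in natural bijection with elements of F^† A over X; i.e., F^* extends to a dependent right adjoint of F_!. -/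
open CategoryTheory Opposite

universe u

variable {C D : Type u} [SmallCategory C] [SmallCategory D]

/-- Sections of a dependent presheaf `A` over a presheaf `Z` (encoded as a functor on the
category of elements of `Z`): natural families of elements. -/
def Sect {Z : Dᵒᵖ ⥤ Type u} (A : Z.Elements ⥤ Type u) : Type u :=
  {s : ∀ e : Z.Elements, A.obj e // ∀ (e e' : Z.Elements) (f : e ⟶ e'), A.map f (s e) = s e'}

/-- The element of `F_! X` over `F Γ` given by applying the unit of `F_! ⊣ F^*` to an
element `x` of `X` over `Γ`. -/
noncomputable def unitElement (F : C ⥤ D) (X : Cᵒᵖ ⥤ Type u) (e : X.Elements) :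
    (F.op.lan.obj X).Elements :=
  (F.op.lan.obj X).elementsMk (F.op.obj e.1)
    (((F.op.lanAdjunction (Type u)).unit.app X).app e.1 e.2)

/-- The action on elements morphisms of the unit of `F_! ⊣ F^*`. -/
noncomputable def unitElementMap (F : C ⥤ D) (X : Cᵒᵖ ⥤ Type u) {e e' : X.Elements}
    (f : e ⟶ e') : unitElement F X e ⟶ unitElement F X e' :=
  ⟨F.op.map f.1, by
    dsimp [unitElement]
    exact (NatTrans.naturality_apply ((F.op.lanAdjunction (Type u)).unit.app X) f.1 e.2).symm.trans
      (congrArg (((F.op.lanAdjunction (Type u)).unit.app X).app e'.1) f.2)⟩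

/-! Sections of `A` form the limit of `A` over the category of elements of `F_! X`, so it
suffices that the functor `∫ X ⥤ ∫ F_! X` induced by the unit is initial. For `e = (d, z)`,
an object of the comma category over `e` is a representative of `z` in the pointwise formula
`(F_! X)(d) = colim_{F c → d} X(c)`; any subset of representatives closed under morphisms is
a union of classes of that colimit, hence contains all representatives of `z` as soon as it
contains one. -/

def CategoryTheory.Functor.naturalFamiliesEquivSections {J : Type*} [Category* J]
    (P : J ⥤ Type*) :
    {s : ∀ j, P.obj j // ∀ (j j' : J) (f : j ⟶ j'), P.map f (s j) = s j'} ≃ P.sections :=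
  Equiv.subtypeEquivRight fun _ => ⟨fun h _ _ f => h _ _ f, fun h _ _ f => h f⟩

section

variable (F : C ⥤ D) (X : Cᵒᵖ ⥤ Type u)

noncomputable def unitElementFunctor : X.Elements ⥤ (F.op.lan.obj X).Elements where
  obj := unitElement F X
  map := unitElementMap F X
  map_id _ := CategoryOfElements.ext _ _ _ (F.op.map_id _)
  map_comp _ _ := CategoryOfElements.ext _ _ _ (F.op.map_comp _ _)

noncomputable def lanCoconeTypes (d : Dᵒᵖ) : (CostructuredArrow.proj F.op d ⋙ X).CoconeTypes :=
  (CostructuredArrow.proj F.op d ⋙ X).coconeTypesEquiv.symm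
    ((Functor.LeftExtension.mk _ (F.op.leftKanExtensionUnit X)).coconeAt d)

lemma lanCoconeTypes_isColimit (d : Dᵒᵖ) : (lanCoconeTypes F X d).IsColimit :=
  (Limits.Types.isColimit_iff_coconeTypesIsColimit _).1
    ⟨F.op.isPointwiseLeftKanExtensionLeftKanExtensionUnit X d⟩

lemma lanCoconeTypes_ι (d : Dᵒᵖ) (f : CostructuredArrow F.op d) (x : X.obj f.left) :
    (lanCoconeTypes F X d).ι f x =
      (F.op.lan.obj X).map f.hom (((F.op.lanAdjunction (Type u)).unit.app X).app f.left x) := by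
  rw [Functor.lanAdjunction_unit]
  rfl

variable (e : (F.op.lan.obj X).Elements)

noncomputable def unitElementOver (f : CostructuredArrow F.op e.1) (x : X.obj f.left)
    (h : (lanCoconeTypes F X e.1).ι f x = e.2) : CostructuredArrow (unitElementFunctor F X) e :=
  CostructuredArrow.mk (Y := X.elementsMk f.left x)
    ⟨f.hom, (lanCoconeTypes_ι F X e.1 f x).symm.trans h⟩

noncomputable def unitElementOverMap {f f' : CostructuredArrow F.op e.1} (φ : f ⟶ f')
    (x : X.obj f.left) (h : (lanCoconeTypes F X e.1).ι f x = e.2)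
    (h' : (lanCoconeTypes F X e.1).ι f' (X.map φ.left x) = e.2) :
    unitElementOver F X e f x h ⟶ unitElementOver F X e f' (X.map φ.left x) h' :=
  CostructuredArrow.homMk ⟨φ.left, rfl⟩
    (CategoryOfElements.ext _ _ _ (CostructuredArrow.w φ))

end

instance initial_unitElementFunctor (F : C ⥤ D) (X : Cᵒᵖ ⥤ Type u) :
    (unitElementFunctor F X).Initial where
  out e := by
    have hc := lanCoconeTypes_isColimit F X e.1
    obtain ⟨f₀, x₀, h₀⟩ := hc.ι_jointly_surjective e.2
    refine IsConnected.of_induct (j₀ := unitElementOver F X e f₀ x₀ h₀) fun p hp₀ hp a => ?_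
    -- membership in `p` of the representatives of a class, as a predicate on the colimit
    let c : (CostructuredArrow.proj F.op e.1 ⋙ X).CoconeTypes :=
      { pt := Prop
        ι f x := ∀ h, unitElementOver F X e f x h ∈ p
        ι_naturality {f f'} φ := funext fun x => propext <| by
          have hx := (lanCoconeTypes F X e.1).ι_naturality_apply φ x
          exact ⟨fun H h => (hp (unitElementOverMap F X e φ x h (hx.trans h))).2 (H _),
            fun H h' => (hp (unitElementOverMap F X e φ x (hx.symm.trans h') h')).1 (H _)⟩ }
    have hdesc : hc.desc c e.2 := by
      rw [← h₀, hc.fac_apply]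
      exact fun _ => hp₀
    have mem_of_represents (f : CostructuredArrow F.op e.1)
        (x : (CostructuredArrow.proj F.op e.1 ⋙ X).obj f)
        (h : (lanCoconeTypes F X e.1).ι f x = e.2) : unitElementOver F X e f x h ∈ p := by
      rw [← h, hc.fac_apply] at hdesc
      exact hdesc h
    exact mem_of_represents (CostructuredArrow.mk a.hom.1) a.left.2
      ((lanCoconeTypes_ι F X e.1 _ _).trans a.hom.2)

/-- Dependent right adjoint to `F_!`: for a dependent presheaf `A` over `F_! X`, sections of
`A` over `F_! X` are in bijection with sections over `X` of the dependent presheaf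
`F^† A = A(F -, η(-))` obtained by restricting along the unit `η : X ⟶ F^* F_! X`. -/
theorem sections_lan_equiv_sections_restrict (F : C ⥤ D) (X : Cᵒᵖ ⥤ Type u)
    (A : (F.op.lan.obj X).Elements ⥤ Type u) :
    Nonempty (Sect A ≃
      {t : ∀ e : X.Elements, A.obj (unitElement F X e) //
        ∀ (e e' : X.Elements) (f : e ⟶ e'), A.map (unitElementMap F X f) (t e) = t e'}) :=
  ⟨A.naturalFamiliesEquivSections.trans <|
    (Equiv.ofBijective _ ((unitElementFunctor F X).bijective_sectionsPrecomp A)).trans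
      (unitElementFunctor F X ⋙ A).naturalFamiliesEquivSections.symm⟩
end
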